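/- arXiv:2011.07265 — 3 statements merged into one kernel-verified Lean document; each statement's English description precedes it below -/
import Mathlib

section
/- For positive definite Hermitian matrix Y ∈ ℂ^{m×m} and any X ∈ ℂ^{m×n}, the function tr(X^H Y^{-1} X) satisfies tr(X^H Y^{-1} X) ≥ 2 Re(tr(X_t^H Y_t^{-1} X)) − tr(Y_t^{-1} X_t X_t^H Y_t^{-1} Y) for any fixed X_t ∈ ℂ^{m×n} and positive definite Y_t ∈ ℂ^{m×m} (up to an additive constant depending only on X_t, Y_t), with equality when (X,Y) = (X_t, Y_t). -/
/-! Completing the square: with `A = Yt⁻¹ Xt`, the matrix `(Y⁻¹X − A)ᴴ Y (Y⁻¹X − A)` is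
positive semidefinite, and the real part of its trace is
`tr(XᴴY⁻¹X) − 2 Re tr(AᴴX) + tr(A Aᴴ Y)`. -/

open Matrix ComplexOrder

namespace Matrix

variable {𝕜 : Type*} [RCLike 𝕜] {m n : Type*} [Fintype m]

lemma re_trace_conjTranspose_mul_comm [Fintype n] (A B : Matrix m n 𝕜) :
    RCLike.re (Aᴴ * B).trace = RCLike.re (Bᴴ * A).trace := by
  rw [← conjTranspose_conjTranspose A, ← conjTranspose_mul, trace_conjTranspose,
    conjTranspose_conjTranspose, RCLike.star_def, RCLike.conj_re]

variable [DecidableEq m]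

lemma PosDef.conjTranspose_mul_mul_sub_inv_mul {Y : Matrix m m 𝕜} (hY : Y.PosDef)
    (A X : Matrix m n 𝕜) :
    (Y⁻¹ * X - A)ᴴ * Y * (Y⁻¹ * X - A) =
      Xᴴ * Y⁻¹ * X - Xᴴ * A - Aᴴ * X + Aᴴ * Y * A := by
  have hdet : IsUnit Y.det := (isUnit_iff_isUnit_det Y).mp hY.isUnit
  simp only [conjTranspose_sub, conjTranspose_mul, hY.inv.isHermitian.eq, Matrix.sub_mul,
    Matrix.mul_sub, Matrix.mul_assoc, mul_nonsing_inv_cancel_left _ _ hdet,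
    nonsing_inv_mul_cancel_left _ _ hdet]
  abel

variable [Fintype n]

theorem PosDef.two_mul_re_trace_le {Y : Matrix m m 𝕜} (hY : Y.PosDef) (A X : Matrix m n 𝕜) :
    2 * RCLike.re (Aᴴ * X).trace ≤
      RCLike.re (Xᴴ * Y⁻¹ * X).trace + RCLike.re (A * Aᴴ * Y).trace := by
  have hsq := (hY.posSemidef.conjTranspose_mul_mul_same (Y⁻¹ * X - A)).trace_nonneg
  rw [hY.conjTranspose_mul_mul_sub_inv_mul, RCLike.nonneg_iff] at hsq
  have hcycle : (Aᴴ * Y * A).trace = (A * Aᴴ * Y).trace := by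
    rw [trace_mul_cycle, Matrix.mul_assoc]
  simp only [trace_add, trace_sub, map_add, map_sub, hcycle,
    re_trace_conjTranspose_mul_comm X A] at hsq
  linarith [hsq.1]

end Matrix

/-- MM minorization of `tr(Xᴴ Y⁻¹ X)` (Lemma 1): for positive definite `Y, Yt`,
`tr(XᴴY⁻¹X) ≥ 2 Re tr(Xtᴴ Yt⁻¹ X) − tr(Yt⁻¹ Xt Xtᴴ Yt⁻¹ Y)` with equality at `(Xt, Yt)`. -/
theorem stmt_0 {m n : ℕ} (X Xt : Matrix (Fin m) (Fin n) ℂ)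
    (Y Yt : Matrix (Fin m) (Fin m) ℂ) (hY : Y.PosDef) (hYt : Yt.PosDef) :
    (2 * ((Xtᴴ * Yt⁻¹ * X).trace).re ≤
      ((Xᴴ * Y⁻¹ * X).trace).re + ((Yt⁻¹ * Xt * Xtᴴ * Yt⁻¹ * Y).trace).re) ∧
    (2 * ((Xtᴴ * Yt⁻¹ * Xt).trace).re =
      ((Xtᴴ * Yt⁻¹ * Xt).trace).re + ((Yt⁻¹ * Xt * Xtᴴ * Yt⁻¹ * Yt).trace).re) := by
  have hA : (Yt⁻¹ * Xt)ᴴ = Xtᴴ * Yt⁻¹ := by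
    rw [conjTranspose_mul, hYt.inv.isHermitian.eq]
  have hequal : (Yt⁻¹ * Xt * Xtᴴ * Yt⁻¹ * Yt).trace = (Xtᴴ * Yt⁻¹ * Xt).trace := by
    rw [nonsing_inv_mul_cancel_right _ _ ((isUnit_iff_isUnit_det Yt).mp hYt.isUnit),
      trace_mul_cycle]
  constructor
  · simpa [hA, Matrix.mul_assoc] using hY.two_mul_re_trace_le (Yt⁻¹ * Xt) X
  · rw [hequal]
    ring
end

section
/- Let R be the M×M exponential correlation matrix with entries R_{i,j} = ρ^{|i−j|} for 0 < ρ < 1. Then tr(R^{-1}) = (M + (M−2)ρ²)/(1 − ρ²). -/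
/-!
The inverse of `R = (ρ^|i-j|)` is `T / (1 - ρ²)`, where `T` is tridiagonal with off-diagonal
entries `-ρ` and diagonal `1 + ρ²`, except `1` in the two corners. Indeed, the `i`-th row
`a_k = ρ^|i-k|` of `R` is geometric on each side of `k = i`, so
`(1 + ρ²) a_k - ρ a_{k-1} - ρ a_{k+1}` is `1 - ρ²` at `k = i` and `0` elsewhere; at the two ends
of the range the missing neighbour would be `ρ a_k`, which is what the corner entries account for.
Hence `tr R⁻¹ = tr T / (1 - ρ²)`.
-/

open Matrix Finset

variable {K : Type*}

section CommRing

variable [CommRing K]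

def kmsTridiagEntry (M : ℕ) (ρ : K) (j k : ℕ) : K :=
  (if j = k then 1 + ρ ^ 2 - (if k = 0 then ρ ^ 2 else 0) - (if k + 1 = M then ρ ^ 2 else 0)
    else 0) - (if j + 1 = k then ρ else 0) - (if j = k + 1 then ρ else 0)

/-- `ρ ^ 2 * g k` stands for `ρ * g (k - 1)` at `k = 0`, and for `ρ * g (k + 1)` at `k + 1 = M`:
the neighbour outside the range continued geometrically. -/
lemma sum_mul_kmsTridiagEntry (M : ℕ) (ρ : K) (g : ℕ → K) {k : ℕ} (hk : k < M) :
    ∑ j ∈ range M, g j * kmsTridiagEntry M ρ j k =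
      (1 + ρ ^ 2) * g k - (if k = 0 then ρ ^ 2 * g k else ρ * g (k - 1))
        - (if k + 1 = M then ρ ^ 2 * g k else ρ * g (k + 1)) := by
  rcases k with _ | k <;>
    simp [kmsTridiagEntry, mul_sub, sum_sub_distrib, mul_ite, sum_ite_eq', hk] <;>
    split_ifs <;> first | omega | ring

lemma pow_dist_left_neighbour (ρ : K) (i k : ℕ) :
    (if k = 0 then ρ ^ 2 * ρ ^ Nat.dist i k else ρ * ρ ^ Nat.dist i (k - 1)) =
      if i < k then ρ ^ Nat.dist i k else ρ ^ 2 * ρ ^ Nat.dist i k := by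
  split_ifs with h0 h
  · omega
  · rfl
  · rw [show Nat.dist i k = Nat.dist i (k - 1) + 1 by unfold Nat.dist; omega]; ring
  · rw [show Nat.dist i (k - 1) = Nat.dist i k + 1 by unfold Nat.dist; omega]; ring

lemma pow_dist_right_neighbour (ρ : K) {M i : ℕ} (hi : i < M) (k : ℕ) :
    (if k + 1 = M then ρ ^ 2 * ρ ^ Nat.dist i k else ρ * ρ ^ Nat.dist i (k + 1)) =
      if k < i then ρ ^ Nat.dist i k else ρ ^ 2 * ρ ^ Nat.dist i k := by
  split_ifs with hM h
  · omega
  · rfl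
  · rw [show Nat.dist i k = Nat.dist i (k + 1) + 1 by unfold Nat.dist; omega]; ring
  · rw [show Nat.dist i (k + 1) = Nat.dist i k + 1 by unfold Nat.dist; omega]; ring

lemma sum_pow_dist_mul_kmsTridiagEntry (ρ : K) {M i k : ℕ} (hi : i < M) (hk : k < M) :
    ∑ j ∈ range M, ρ ^ Nat.dist i j * kmsTridiagEntry M ρ j k =
      if i = k then 1 - ρ ^ 2 else 0 := by
  rw [sum_mul_kmsTridiagEntry M ρ _ hk, pow_dist_left_neighbour, pow_dist_right_neighbour ρ hi]
  rcases lt_trichotomy i k with h | rfl | h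
  · simp [h, h.not_gt, h.ne]; ring
  · simp
  · simp [h, h.not_gt, h.ne']; ring

def kmsMatrix (M : ℕ) (ρ : K) : Matrix (Fin M) (Fin M) K :=
  of fun i j => ρ ^ Nat.dist (i : ℕ) (j : ℕ)

def kmsTridiag (M : ℕ) (ρ : K) : Matrix (Fin M) (Fin M) K :=
  of fun j k => kmsTridiagEntry M ρ j k

lemma kmsMatrix_mul_kmsTridiag (M : ℕ) (ρ : K) :
    kmsMatrix M ρ * kmsTridiag M ρ = (1 - ρ ^ 2) • (1 : Matrix (Fin M) (Fin M) K) := by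
  ext i k
  simp only [mul_apply, kmsMatrix, kmsTridiag, of_apply]
  rw [Fin.sum_univ_eq_sum_range (fun j => ρ ^ Nat.dist (i : ℕ) j * kmsTridiagEntry M ρ j k),
    sum_pow_dist_mul_kmsTridiagEntry ρ i.isLt k.isLt]
  simp [one_apply, Fin.ext_iff]

lemma trace_kmsTridiag {M : ℕ} (hM : 1 ≤ M) (ρ : K) :
    (kmsTridiag M ρ).trace = M + (M - 2) * ρ ^ 2 := by
  obtain ⟨N, rfl⟩ := Nat.exists_eq_add_of_le' hM
  simp only [trace, diag_apply, kmsTridiag, of_apply]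
  rw [Fin.sum_univ_eq_sum_range (fun k => kmsTridiagEntry (N + 1) ρ k k)]
  simp [kmsTridiagEntry, sum_sub_distrib, sum_ite_eq']
  ring

end CommRing

lemma inv_kmsMatrix [Field K] (M : ℕ) {ρ : K} (hρ : 1 - ρ ^ 2 ≠ 0) :
    (kmsMatrix M ρ)⁻¹ = (1 - ρ ^ 2)⁻¹ • kmsTridiag M ρ := by
  refine inv_eq_right_inv ?_
  rw [mul_smul_comm, kmsMatrix_mul_kmsTridiag, smul_smul, inv_mul_cancel₀ hρ, one_smul]

/-- For the `M×M` exponential correlation matrix `R i j = ρ^|i−j|`, `0 < ρ < 1`,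
`tr(R⁻¹) = (M + (M−2)ρ²)/(1 − ρ²)`. -/
theorem stmt_3 (M : ℕ) (hM : 1 ≤ M) (ρ : ℝ) (hρ0 : 0 < ρ) (hρ1 : ρ < 1) :
    (Matrix.of fun i j : Fin M => ρ ^ Nat.dist (i : ℕ) (j : ℕ))⁻¹.trace =
      ((M : ℝ) + ((M : ℝ) - 2) * ρ ^ 2) / (1 - ρ ^ 2) := by
  have hρ : 1 - ρ ^ 2 ≠ 0 := by nlinarith
  change (kmsMatrix M ρ)⁻¹.trace = _
  rw [inv_kmsMatrix M hρ, trace_smul, trace_kmsTridiag hM, smul_eq_mul, inv_mul_eq_div]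
end

section
/- Let R_ub and R_lb be M×M Hermitian positive definite matrices with unit diagonal entries, and let σ² > 0, T_p > 0, K ≥ 1. Define MSE(R_ub, R_lb) = Σ_{i=1}^M [ 1/(1/λ_i(R_ub) + T_p/σ²) + K/(1/λ_i(R_lb) + T_p/σ²) ]. Then MSE(R_ub, R_lb) ≤ M(K+1)/(1 + T_p/σ²), with equality if and only if R_ub = R_lb = I_M. -/
/-!
The map `x ↦ 1 / (1 / x + c) = x / (1 + c x)` is concave on `(0, ∞)` and lies below its tangent
at `x = 1`, the gap being `c (x - 1)² / ((1 + c)² (1 + c x))`. The eigenvalues of a unit-diagonal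
Hermitian matrix sum to its trace `M`, so summing the tangent over them gives exactly
`M / (1 + c)`; equality forces every eigenvalue to be `1`, i.e. the matrix to be the identity.
-/

open Matrix ComplexOrder

section TangentBound

variable {c x : ℝ}

lemma tangent_sub_one_div_one_div_add (hc : 0 ≤ c) (hx : 0 < x) :
    (1 / (1 + c) + (x - 1) / (1 + c) ^ 2) - 1 / (1 / x + c)
      = c * (x - 1) ^ 2 / ((1 + c) ^ 2 * (1 + c * x)) := by
  have : 0 < 1 + c * x := by positivity
  have : 0 < 1 / x + c := by positivity
  field_simp
  ring

lemma one_div_one_div_add_le_tangent (hc : 0 ≤ c) (hx : 0 < x) :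
    1 / (1 / x + c) ≤ 1 / (1 + c) + (x - 1) / (1 + c) ^ 2 := by
  have hgap := tangent_sub_one_div_one_div_add hc hx
  have : 0 ≤ c * (x - 1) ^ 2 / ((1 + c) ^ 2 * (1 + c * x)) := by positivity
  linarith

lemma one_div_one_div_add_eq_tangent_iff (hc : 0 < c) (hx : 0 < x) :
    1 / (1 / x + c) = 1 / (1 + c) + (x - 1) / (1 + c) ^ 2 ↔ x = 1 := by
  have hgap := tangent_sub_one_div_one_div_add hc.le hx
  have : 0 < (1 + c) ^ 2 * (1 + c * x) := by positivity
  rw [eq_comm, ← sub_eq_zero, hgap, div_eq_zero_iff, mul_eq_zero, pow_eq_zero_iff two_ne_zero,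
    sub_eq_zero]
  simp only [hc.ne', this.ne', false_or, or_false]

lemma sum_tangent_of_sum_eq_card {ι : Type*} [Fintype ι] {x : ι → ℝ}
    (hsum : ∑ i, x i = Fintype.card ι) :
    ∑ i, (1 / (1 + c) + (x i - 1) / (1 + c) ^ 2) = Fintype.card ι / (1 + c) := by
  rw [Finset.sum_add_distrib, ← Finset.sum_div, ← Finset.sum_div, Finset.sum_sub_distrib, hsum]
  simp

variable {ι : Type*} [Fintype ι] {x : ι → ℝ}

lemma sum_one_div_one_div_add_le_of_sum_eq_card (hc : 0 ≤ c) (hx : ∀ i, 0 < x i)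
    (hsum : ∑ i, x i = Fintype.card ι) :
    ∑ i, 1 / (1 / x i + c) ≤ Fintype.card ι / (1 + c) := by
  rw [← sum_tangent_of_sum_eq_card hsum]
  exact Finset.sum_le_sum fun i _ ↦ one_div_one_div_add_le_tangent hc (hx i)

lemma sum_one_div_one_div_add_eq_iff_of_sum_eq_card (hc : 0 < c) (hx : ∀ i, 0 < x i)
    (hsum : ∑ i, x i = Fintype.card ι) :
    ∑ i, 1 / (1 / x i + c) = Fintype.card ι / (1 + c) ↔ ∀ i, x i = 1 := by
  rw [← sum_tangent_of_sum_eq_card hsum,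
    Finset.sum_eq_sum_iff_of_le fun i _ ↦ one_div_one_div_add_le_tangent hc.le (hx i)]
  simp only [Finset.mem_univ, true_imp_iff, one_div_one_div_add_eq_tangent_iff hc (hx _)]

end TangentBound

namespace Matrix.IsHermitian

variable {n 𝕜 : Type*} [Fintype n] [DecidableEq n] [RCLike 𝕜] {A : Matrix n n 𝕜}

lemma sum_eigenvalues_of_diag_eq_one (hA : A.IsHermitian) (hd : ∀ i, A i i = 1) :
    ∑ i, hA.eigenvalues i = Fintype.card n := by
  have htrace := hA.trace_eq_sum_eigenvalues
  simp only [trace, diag, hd, Finset.sum_const, Finset.card_univ, nsmul_one] at htrace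
  exact_mod_cast htrace.symm

lemma eigenvalues_eq_one_iff (hA : A.IsHermitian) : hA.eigenvalues = 1 ↔ A = 1 := by
  refine ⟨fun h ↦ ?_, fun h ↦ ?_⟩
  · rw [hA.spectral_theorem, h]
    simp
  · ext i
    simp [h, eigenvalues_eq, dotProduct_comm, ← EuclideanSpace.inner_eq_star_dotProduct]

end Matrix.IsHermitian

theorem stmt_7_general (M K : ℕ) (hK : 1 ≤ K) (Tp σ2 : ℝ) (hTp : 0 < Tp)
    (hσ : 0 < σ2) (Rub Rlb : Matrix (Fin M) (Fin M) ℂ)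
    (hub : Rub.PosDef) (hlb : Rlb.PosDef)
    (hdub : ∀ i, Rub i i = 1) (hdlb : ∀ i, Rlb i i = 1) :
    (∑ i, (1 / (1 / hub.1.eigenvalues i + Tp / σ2)
        + (K : ℝ) * (1 / (1 / hlb.1.eigenvalues i + Tp / σ2)))
      ≤ (M : ℝ) * ((K : ℝ) + 1) / (1 + Tp / σ2)) ∧
    ((∑ i, (1 / (1 / hub.1.eigenvalues i + Tp / σ2)
        + (K : ℝ) * (1 / (1 / hlb.1.eigenvalues i + Tp / σ2)))
      = (M : ℝ) * ((K : ℝ) + 1) / (1 + Tp / σ2)) ↔ Rub = 1 ∧ Rlb = 1) := by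
  have hc : 0 < Tp / σ2 := div_pos hTp hσ
  have hK' : (0 : ℝ) < K := by exact_mod_cast hK
  have hsub := hub.1.sum_eigenvalues_of_diag_eq_one hdub
  have hslb := hlb.1.sum_eigenvalues_of_diag_eq_one hdlb
  have hle_ub := sum_one_div_one_div_add_le_of_sum_eq_card hc.le hub.eigenvalues_pos hsub
  have hle_lb := sum_one_div_one_div_add_le_of_sum_eq_card hc.le hlb.eigenvalues_pos hslb
  simp only [Fintype.card_fin] at hle_ub hle_lb
  rw [Finset.sum_add_distrib, ← Finset.mul_sum,
    show (M : ℝ) * (K + 1) / (1 + Tp / σ2) = M / (1 + Tp / σ2) + K * (M / (1 + Tp / σ2)) by ring]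
  refine ⟨add_le_add hle_ub (mul_le_mul_of_nonneg_left hle_lb hK'.le), ?_⟩
  rw [add_eq_add_iff_eq_and_eq hle_ub (mul_le_mul_of_nonneg_left hle_lb hK'.le),
    mul_right_inj' hK'.ne', ← hub.1.eigenvalues_eq_one_iff, ← hlb.1.eigenvalues_eq_one_iff,
    funext_iff, funext_iff]
  exact and_congr
    (by simpa only [Fintype.card_fin, Pi.one_apply] using sum_one_div_one_div_add_eq_iff_of_sum_eq_card hc hub.eigenvalues_pos hsub)
    (by simpa only [Fintype.card_fin, Pi.one_apply] using sum_one_div_one_div_add_eq_iff_of_sum_eq_card hc hlb.eigenvalues_pos hslb)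

/-- The LMMSE MSE `Σ_i [1/(1/λ_i(R_ub)+T_p/σ²) + K/(1/λ_i(R_lb)+T_p/σ²)]` of unit-diagonal
positive definite correlation matrices is at most `M(K+1)/(1+T_p/σ²)`, with equality iff
`R_ub = R_lb = I`. -/
theorem stmt_7 (M K : ℕ) (hM : 1 ≤ M) (hK : 1 ≤ K) (Tp σ2 : ℝ) (hTp : 0 < Tp)
    (hσ : 0 < σ2) (Rub Rlb : Matrix (Fin M) (Fin M) ℂ)
    (hub : Rub.PosDef) (hlb : Rlb.PosDef)
    (hdub : ∀ i, Rub i i = 1) (hdlb : ∀ i, Rlb i i = 1) :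
    (∑ i, (1 / (1 / hub.1.eigenvalues i + Tp / σ2)
        + (K : ℝ) * (1 / (1 / hlb.1.eigenvalues i + Tp / σ2)))
      ≤ (M : ℝ) * ((K : ℝ) + 1) / (1 + Tp / σ2)) ∧
    ((∑ i, (1 / (1 / hub.1.eigenvalues i + Tp / σ2)
        + (K : ℝ) * (1 / (1 / hlb.1.eigenvalues i + Tp / σ2)))
      = (M : ℝ) * ((K : ℝ) + 1) / (1 + Tp / σ2)) ↔ Rub = 1 ∧ Rlb = 1) :=
  stmt_7_general M K hK Tp σ2 hTp hσ Rub Rlb hub hlb hdub hdlb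
end
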